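/- arXiv:math/0609659 — 2 statements merged into one kernel-verified Lean document; each statement's English description precedes it below -/
import Mathlib

section
/- Let K be an infinite field and n, r ≥ 1. There exists an injective unital K-algebra homomorphism Φ : End_{KΣ_r}(E^{⊗r}) → End_K(Ẽ^{⊗r}) such that Φ(ξ^fin_{i,j}) = ξ_{i,j} for all i, j ∈ I(n,r); its image is the K-linear span of {ξ_{i,j} : i, j ∈ I(n,r)}, and this image is contained in the centralizer algebra End_{KΣ̂_r}(Ẽ^{⊗r}). (Thus the Schur algebra S(n,r) embeds naturally into the affine Schur algebra S̃(n,r).) -/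
noncomputable section

namespace AffineSchur

variable (K : Type*) [Field K] (n r : ℕ)

/-- The right action of the pair `(σ,ε) ∈ Σ̂_r = Σ_r ⋉ ℤ^r` on `I(ℤ,r)`:
`i·(σ,ε) = i∘σ + n·ε`. -/
def act (σ : Equiv.Perm (Fin r)) (ε : Fin r → ℤ) (i : Fin r → ℤ) : Fin r → ℤ :=
  fun k => i (σ k) + n * ε k

/-- The tensor space `Ẽ^{⊗r}`: the free `K`-module with basis `(v_i)_{i ∈ I(ℤ,r)}`. -/
abbrev TensorSpace := (Fin r → ℤ) →₀ K

/-- The right-translation operator `T_{σ,ε} : v_i ↦ v_{i·(σ,ε)}`. -/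
def transOp (σ : Equiv.Perm (Fin r)) (ε : Fin r → ℤ) :
    Module.End K (TensorSpace K r) :=
  Finsupp.lmapDomain K K (act n r σ ε)

/-- The finite set `{k : (k,l) lies in the Σ̂_r-orbit of (i,j)}`. -/
def xiSupport (i j l : Fin r → ℤ) : Finset (Fin r → ℤ) := by
  classical
  exact (Finset.univ.filter fun σ : Equiv.Perm (Fin r) =>
      ∀ k, (n : ℤ) ∣ (l k - j (σ k))).image
    fun σ => fun k => i (σ k) + (l k - j (σ k))

/-- The operator `ξ_{i,j} ∈ End_K(Ẽ^{⊗r})` given by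
`ξ_{i,j}(v_l) = Σ_{k : (k,l) in the Σ̂_r-orbit of (i,j)} v_k`. -/
def xi (i j : Fin r → ℤ) : Module.End K (TensorSpace K r) :=
  Finsupp.lsum K fun l => LinearMap.toSpanSingleton K _
    (∑ k ∈ xiSupport n r i j l, Finsupp.single k (1 : K))

/-- The centralizer algebra `End_{KΣ̂_r}(Ẽ^{⊗r})` of all the translation operators
`T_{σ,ε}` inside `End_K(Ẽ^{⊗r})` — the affine Schur algebra `S̃(n,r)`. -/
def affineSchur : Subalgebra K (Module.End K (TensorSpace K r)) :=
  Subalgebra.centralizer K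
    (Set.range fun p : Equiv.Perm (Fin r) × (Fin r → ℤ) => transOp K n r p.1 p.2)

/-- `I(n,r)`: the set of r-tuples with entries in `{1,…,n}`, as a subtype of `I(ℤ,r)`. -/
def FinIdx (n r : ℕ) := {i : Fin r → ℤ // ∀ k, 1 ≤ i k ∧ i k ≤ (n : ℤ)}

/-- The tensor space `E^{⊗r}`: the free `K`-module with basis indexed by `I(n,r)`. -/
abbrev FinTensorSpace := (FinIdx n r) →₀ K

/-- The place-permutation operator `v_i ↦ v_{i∘σ}` on `E^{⊗r}`. -/
def permOpFin (σ : Equiv.Perm (Fin r)) : Module.End K (FinTensorSpace K n r) :=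
  Finsupp.lmapDomain K K
    (fun i : FinIdx n r => (⟨fun k => i.1 (σ k), fun k => i.2 (σ k)⟩ : FinIdx n r))

/-- The finite set `{k : (k,l) lies in the Σ_r-orbit of (i,j)}` inside `I(n,r)`. -/
def xiFinSupport (i j l : FinIdx n r) : Finset (FinIdx n r) := by
  classical
  exact (Finset.univ.filter fun σ : Equiv.Perm (Fin r) =>
      (fun k => j.1 (σ k)) = l.1).image
    fun σ => (⟨fun k => i.1 (σ k), fun k => i.2 (σ k)⟩ : FinIdx n r)

/-- The operator `ξ^fin_{i,j} ∈ End_K(E^{⊗r})` given by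
`ξ^fin_{i,j}(v_l) = Σ_{k : (k,l) in the Σ_r-orbit of (i,j)} v_k`. -/
def xiFin (i j : FinIdx n r) : Module.End K (FinTensorSpace K n r) :=
  Finsupp.lsum K fun l => LinearMap.toSpanSingleton K _
    (∑ k ∈ xiFinSupport n r i j l, Finsupp.single k (1 : K))

/-- The Schur algebra `S(n,r) = End_{KΣ_r}(E^{⊗r})`: the centralizer of the
place-permutation operators inside `End_K(E^{⊗r})`. -/
def schurAlgebra : Subalgebra K (Module.End K (FinTensorSpace K n r)) :=
  Subalgebra.centralizer K (Set.range fun σ : Equiv.Perm (Fin r) => permOpFin K n r σ)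

/-!
Write each `l ∈ I(ℤ,r)` uniquely as `j + n·ε` with `j ∈ I(n,r)` and `ε ∈ ℤ^r`; this identifies
`Ẽ^{⊗r}` with `E^{⊗r} ⊗ K[ℤ^r]`, and `Φ(f) = f ⊗ id` is an injective algebra map. The
`Σ̂_r`-orbit of `(i,j)` meets `I(ℤ,r) × (I(n,r) + n·ε)` exactly in the `n·ε`-translate of the
`Σ_r`-orbit of `(i,j)`, whence `Φ(ξ^fin_{i,j}) = ξ_{i,j}`. Matrix coefficients of elements of
`S(n,r)` are constant on `Σ_r`-orbits of pairs, so the `ξ^fin_{i,j}` span `S(n,r)` and the image of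
`Φ` is the span of the `ξ_{i,j}`; these commute with every `T_{σ,ε}` since `Σ̂_r` permutes their
orbit sets.
-/

open MulOpposite

namespace FinIdx

variable {n r}

instance : Finite (FinIdx n r) :=
  Finite.of_equiv (Fin r → Set.Icc (1 : ℤ) n) Equiv.subtypePiEquivPi.symm

instance : MulAction (Equiv.Perm (Fin r))ᵐᵒᵖ (FinIdx n r) where
  smul σ i := ⟨fun k => i.1 (σ.unop k), fun k => i.2 (σ.unop k)⟩
  one_smul _ := rfl
  mul_smul _ _ _ := rfl

def shift (ε : Fin r → ℤ) (j : FinIdx n r) : Fin r → ℤ := fun k => j.1 k + n * ε k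

lemma shift_injective (ε : Fin r → ℤ) : Function.Injective (shift (n := n) ε) :=
  fun a b h => Subtype.ext <| funext fun k => by simpa [shift] using congrFun h k

/-- Division with remainder by `n`, shifted so that the remainders lie in `{1,…,n}`. -/
def decompose (n : ℕ) [NeZero n] : (Fin r → ℤ) ≃ FinIdx n r × (Fin r → ℤ) :=
  have hn : (0 : ℤ) < n := by exact_mod_cast NeZero.pos n
  { toFun l := (⟨fun k => (l k - 1) % n + 1, fun k => by
        have := Int.emod_nonneg (l k - 1) hn.ne'
        have := Int.emod_lt_of_pos (l k - 1) hn
        dsimp only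
        omega⟩, fun k => (l k - 1) / n)
    invFun p := shift p.2 p.1
    left_inv l := funext fun k => by
      have := Int.emod_add_mul_ediv (l k - 1) n
      simp only [shift]
      linarith
    right_inv := fun ⟨j, ε⟩ => by
      have key (k : Fin r) := (Int.ediv_emod_unique (a := shift ε j k - 1) (b := n)
        (r := j.1 k - 1) (q := ε k) hn).mpr
        ⟨by simp only [shift]; ring, by linarith [(j.2 k).1], by linarith [(j.2 k).2]⟩
      refine Prod.ext (Subtype.ext (funext fun k => ?_)) (funext fun k => (key k).1)
      simp [(key k).2] }

@[simp]
lemma decompose_symm_apply [NeZero n] (p : FinIdx n r × (Fin r → ℤ)) :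
    (decompose n).symm p = shift p.2 p.1 := rfl

@[simp]
lemma decompose_shift [NeZero n] (ε : Fin r → ℤ) (j : FinIdx n r) :
    decompose n (shift ε j) = (j, ε) :=
  (decompose n).apply_symm_apply (j, ε)

lemma shift_inj [NeZero n] {ε δ : Fin r → ℤ} {i j : FinIdx n r} :
    shift ε i = shift δ j ↔ i = j ∧ ε = δ := by
  simpa using (decompose n (r := r)).symm.injective.eq_iff (a := (i, ε)) (b := (j, δ))

end FinIdx

section Extension

variable {n r}

def shiftMap (ε : Fin r → ℤ) : FinTensorSpace K n r →ₗ[K] TensorSpace K r :=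
  Finsupp.lmapDomain K K (FinIdx.shift ε)

variable {K}

lemma shiftMap_single (ε : Fin r → ℤ) (j : FinIdx n r) (c : K) :
    shiftMap K ε (Finsupp.single j c) = Finsupp.single (FinIdx.shift ε j) c :=
  Finsupp.mapDomain_single

lemma shiftMap_injective (ε : Fin r → ℤ) : Function.Injective (shiftMap K (n := n) ε) :=
  Finsupp.mapDomain_injective (FinIdx.shift_injective ε)

variable [NeZero n]

/-- The endomorphism `f ⊗ id` of `Ẽ^{⊗r} ≅ E^{⊗r} ⊗ K[ℤ^r]`. -/
def extendEnd (f : Module.End K (FinTensorSpace K n r)) : Module.End K (TensorSpace K r) :=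
  Finsupp.lsum K fun l =>
    shiftMap K (FinIdx.decompose n l).2 ∘ₗ f ∘ₗ Finsupp.lsingle (FinIdx.decompose n l).1

lemma extendEnd_comp_shiftMap (f : Module.End K (FinTensorSpace K n r)) (ε : Fin r → ℤ) :
    extendEnd f ∘ₗ shiftMap K ε = shiftMap K ε ∘ₗ f := by
  refine Finsupp.lhom_ext fun j c => ?_
  simp [extendEnd, shiftMap_single]

lemma eq_extendEnd_of_comp_shiftMap {f : Module.End K (FinTensorSpace K n r)}
    {g : Module.End K (TensorSpace K r)} (h : ∀ ε, g ∘ₗ shiftMap K ε = shiftMap K ε ∘ₗ f) :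
    g = extendEnd f := by
  refine Finsupp.lhom_ext fun l c => ?_
  obtain ⟨⟨j, ε⟩, rfl⟩ := (FinIdx.decompose n).symm.surjective l
  simp only [FinIdx.decompose_symm_apply, ← shiftMap_single, ← LinearMap.comp_apply, h,
    extendEnd_comp_shiftMap]

lemma extendEnd_injective : Function.Injective (extendEnd (K := K) (n := n) (r := r)) :=
  fun f g hfg => LinearMap.ext fun x => shiftMap_injective 0 <| by
    rw [← LinearMap.comp_apply, ← extendEnd_comp_shiftMap, hfg, extendEnd_comp_shiftMap,
      LinearMap.comp_apply]

variable (K n r)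

def extendAlgHom : Module.End K (FinTensorSpace K n r) →ₐ[K] Module.End K (TensorSpace K r) where
  toFun := extendEnd
  map_one' := (eq_extendEnd_of_comp_shiftMap fun ε => by rfl).symm
  map_mul' f g := (eq_extendEnd_of_comp_shiftMap fun ε => by
    simp only [Module.End.mul_eq_comp, LinearMap.comp_assoc, extendEnd_comp_shiftMap]
    simp only [← LinearMap.comp_assoc, extendEnd_comp_shiftMap]).symm
  map_zero' := (eq_extendEnd_of_comp_shiftMap fun ε => by simp).symm
  map_add' f g := (eq_extendEnd_of_comp_shiftMap fun ε => by
    simp [LinearMap.add_comp, LinearMap.comp_add, extendEnd_comp_shiftMap]).symm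
  commutes' a := (eq_extendEnd_of_comp_shiftMap fun ε => by
    simp [Algebra.algebraMap_eq_smul_one, Module.End.one_eq_id, LinearMap.smul_comp,
      LinearMap.comp_smul]).symm

end Extension

section OrbitSums

variable {R α β : Type*} [CommSemiring R]

lemma lsum_toSpanSingleton_comp_lmapDomain {S : α → Finset α} {T : β → Finset β} {g : α ↪ β}
    (hST : ∀ a, T (g a) = (S a).map g) :
    Finsupp.lsum R (fun b => LinearMap.toSpanSingleton R _ (∑ k ∈ T b, Finsupp.single k 1)) ∘ₗ
        Finsupp.lmapDomain R R g =
      Finsupp.lmapDomain R R g ∘ₗ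
        Finsupp.lsum R fun a => LinearMap.toSpanSingleton R _ (∑ k ∈ S a, Finsupp.single k 1) := by
  refine Finsupp.lhom_ext fun a c => ?_
  simp [hST]

end OrbitSums

section Orbits

variable {n r}

lemma act_val_eq_shift (σ : Equiv.Perm (Fin r)) (ε : Fin r → ℤ) (j : FinIdx n r) :
    act n r σ ε j.1 = FinIdx.shift ε (op σ • j) := rfl

lemma act_act (σ τ : Equiv.Perm (Fin r)) (ε δ : Fin r → ℤ) (i : Fin r → ℤ) :
    act n r σ ε (act n r τ δ i) = act n r (σ.trans τ) (fun k => δ (σ k) + ε k) i := by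
  funext k
  simp only [act, Equiv.trans_apply]
  ring

lemma act_injective (σ : Equiv.Perm (Fin r)) (ε : Fin r → ℤ) :
    Function.Injective (act n r σ ε) :=
  fun a b h => funext fun k => by simpa [act] using congrFun h (σ.symm k)

lemma mem_xiSupport {i j l k : Fin r → ℤ} :
    k ∈ xiSupport n r i j l ↔ ∃ σ ε, act n r σ ε i = k ∧ act n r σ ε j = l := by
  classical
  simp only [xiSupport, Finset.mem_image, Finset.mem_filter, Finset.mem_univ, true_and]
  constructor
  · rintro ⟨σ, hdvd, rfl⟩
    choose ε hε using hdvd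
    refine ⟨σ, ε, funext fun k => ?_, funext fun k => ?_⟩ <;> simp [act, ← hε]
  · rintro ⟨σ, ε, rfl, rfl⟩
    exact ⟨σ, fun k => ⟨ε k, by simp [act]⟩, funext fun k => by simp [act]⟩

lemma xiSupport_act (i j l : Fin r → ℤ) (σ : Equiv.Perm (Fin r)) (ε : Fin r → ℤ) :
    xiSupport n r i j (act n r σ ε l) =
      (xiSupport n r i j l).map ⟨act n r σ ε, act_injective σ ε⟩ := by
  ext x
  simp only [Finset.mem_map, Function.Embedding.coeFn_mk, mem_xiSupport]
  constructor
  · rintro ⟨τ, δ, rfl, hj⟩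
    have hfactor : ∀ y, act n r σ ε (act n r (σ.symm.trans τ)
        (fun k => δ (σ.symm k) - ε (σ.symm k)) y) = act n r τ δ y := fun y => by
      rw [act_act]; congr 1 <;> ext <;> simp
    exact ⟨_, ⟨_, _, rfl, act_injective σ ε (by rw [hfactor, hj])⟩, hfactor i⟩
  · rintro ⟨k, ⟨τ, δ, rfl, rfl⟩, rfl⟩
    exact ⟨_, _, (act_act ..).symm, (act_act ..).symm⟩

lemma mem_xiFinSupport {i j l k : FinIdx n r} :
    k ∈ xiFinSupport n r i j l ↔ (k, l) ∈ MulAction.orbit (Equiv.Perm (Fin r))ᵐᵒᵖ (i, j) := by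
  classical
  refine Finset.mem_image.trans ?_
  simp only [Finset.mem_filter, Finset.mem_univ, true_and]
  rw [MulAction.mem_orbit_iff, op_surjective.exists]
  refine exists_congr fun σ => ?_
  rw [Prod.smul_mk, Prod.mk.injEq, and_comm]
  exact and_congr Iff.rfl ⟨fun h => Subtype.ext h, congrArg Subtype.val⟩

lemma xiFinSupport_smul (i j l : FinIdx n r) (g : (Equiv.Perm (Fin r))ᵐᵒᵖ) :
    xiFinSupport n r i j (g • l) =
      (xiFinSupport n r i j l).map (MulAction.toPerm g).toEmbedding := by
  ext x
  have hpair : ((MulAction.toPerm g).symm x, l) = g⁻¹ • (x, g • l) := by simp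
  rw [Finset.mem_map_equiv, mem_xiFinSupport, mem_xiFinSupport, hpair,
    MulAction.mem_orbit_symm (a₁ := g⁻¹ • _), MulAction.orbit_smul, MulAction.mem_orbit_symm]

lemma xiSupport_shift [NeZero n] (i j l : FinIdx n r) (ε : Fin r → ℤ) :
    xiSupport n r i.1 j.1 (FinIdx.shift ε l) =
      (xiFinSupport n r i j l).map ⟨FinIdx.shift ε, FinIdx.shift_injective ε⟩ := by
  ext x
  simp only [Finset.mem_map, Function.Embedding.coeFn_mk, mem_xiSupport, mem_xiFinSupport,
    MulAction.mem_orbit_iff, op_surjective.exists, act_val_eq_shift, FinIdx.shift_inj,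
    Prod.smul_mk, Prod.mk.injEq]
  constructor
  · rintro ⟨σ, _, rfl, hj, rfl⟩
    exact ⟨_, ⟨σ, rfl, hj⟩, rfl⟩
  · rintro ⟨_, ⟨σ, rfl, hj⟩, rfl⟩
    exact ⟨σ, ε, rfl, hj, rfl⟩

end Orbits

section Operators

variable {K n r}

lemma xi_mem_affineSchur (i j : Fin r → ℤ) : xi K n r i j ∈ affineSchur K n r := by
  rw [affineSchur, Subalgebra.mem_centralizer_iff]
  rintro _ ⟨⟨σ, ε⟩, rfl⟩
  exact (lsum_toSpanSingleton_comp_lmapDomain (g := ⟨act n r σ ε, act_injective σ ε⟩)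
    (xiSupport_act i j · σ ε)).symm

lemma xiFin_mem_schurAlgebra (i j : FinIdx n r) : xiFin K n r i j ∈ schurAlgebra K n r := by
  rw [schurAlgebra, Subalgebra.mem_centralizer_iff]
  rintro _ ⟨σ, rfl⟩
  exact (lsum_toSpanSingleton_comp_lmapDomain (g := (MulAction.toPerm (op σ)).toEmbedding)
    (xiFinSupport_smul i j · (op σ))).symm

lemma extendAlgHom_xiFin [NeZero n] (i j : FinIdx n r) :
    extendAlgHom K n r (xiFin K n r i j) = xi K n r i.1 j.1 :=
  (eq_extendEnd_of_comp_shiftMap fun ε =>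
    lsum_toSpanSingleton_comp_lmapDomain (g := ⟨FinIdx.shift ε, FinIdx.shift_injective ε⟩)
      (xiSupport_shift i j · ε)).symm

lemma xiFin_single_one_apply (i j l k : FinIdx n r) :
    xiFin K n r i j (Finsupp.single l 1) k =
      (MulAction.orbit (Equiv.Perm (Fin r))ᵐᵒᵖ (i, j)).indicator 1 (k, l) := by
  classical
  simp [xiFin, Finsupp.finsetSum_apply, Finsupp.single_apply, Set.indicator_apply,
    mem_xiFinSupport]

lemma apply_single_smul_of_mem_schurAlgebra {f : Module.End K (FinTensorSpace K n r)}
    (hf : f ∈ schurAlgebra K n r) (g : (Equiv.Perm (Fin r))ᵐᵒᵖ) (k l : FinIdx n r) :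
    f (Finsupp.single (g • l) 1) (g • k) = f (Finsupp.single l 1) k := by
  have hcomm : permOpFin K n r g.unop * f = f * permOpFin K n r g.unop :=
    (Subalgebra.mem_centralizer_iff K).1 hf _ ⟨_, rfl⟩
  have hsingle : Finsupp.mapDomain (g • ·) (f (Finsupp.single l 1)) =
      f (Finsupp.mapDomain (g • ·) (Finsupp.single l 1)) :=
    LinearMap.congr_fun hcomm (Finsupp.single l 1)
  rw [Finsupp.mapDomain_single] at hsingle
  rw [← hsingle]
  exact Finsupp.mapDomain_apply (MulAction.injective g) _ _

end Operators

section Span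

variable {K n r}

lemma mem_orbit_out_iff {G α : Type*} [Group G] [MulAction G α] (a : α)
    (ω : MulAction.orbitRel.Quotient G α) :
    a ∈ MulAction.orbit G ω.out ↔ ⟦a⟧ = ω := by
  rw [← MulAction.orbitRel.Quotient.orbit_eq_orbit_out ω Quotient.out_eq',
    MulAction.orbitRel.Quotient.mem_orbit]

/-- `f = ∑ c_p • ξ^fin_p` over one representative `p` of each `Σ_r`-orbit of pairs, with `c_p`
the matrix coefficient of `f` at `p`; no division by orbit sizes is involved. -/
lemma mem_span_xiFin_of_mem_schurAlgebra {f : Module.End K (FinTensorSpace K n r)}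
    (hf : f ∈ schurAlgebra K n r) :
    f ∈ Submodule.span K {g | ∃ i j : FinIdx n r, g = xiFin K n r i j} := by
  classical
  let Q := MulAction.orbitRel.Quotient (Equiv.Perm (Fin r))ᵐᵒᵖ (FinIdx n r × FinIdx n r)
  have := Fintype.ofFinite Q
  let c (p : FinIdx n r × FinIdx n r) : K := f (Finsupp.single p.2 1) p.1
  have hc (p : FinIdx n r × FinIdx n r) : c (⟦p⟧ : Q).out = c p := by
    obtain ⟨g, hg⟩ := Quotient.mk_out (s := MulAction.orbitRel (Equiv.Perm (Fin r))ᵐᵒᵖ _) p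
    rw [← hg]
    exact apply_single_smul_of_mem_schurAlgebra hf g p.1 p.2
  have hf_eq : f = ∑ ω : Q, c ω.out • xiFin K n r ω.out.1 ω.out.2 := by
    ext l k
    simp only [LinearMap.coe_comp, Function.comp_apply, Finsupp.lsingle_apply, LinearMap.coe_sum,
      LinearMap.coe_smul, Finset.sum_apply, Pi.smul_apply, Finsupp.coe_finsetSum,
      Finsupp.coe_smul, xiFin_single_one_apply, Prod.mk.eta, Set.indicator_apply,
      mem_orbit_out_iff, Pi.one_apply, smul_eq_mul, mul_ite, mul_one, mul_zero]
    rw [Finset.sum_ite_eq, if_pos (Finset.mem_univ _)]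
    exact (hc (k, l)).symm
  rw [hf_eq]
  exact Submodule.sum_mem _ fun ω _ => Submodule.smul_mem _ _ (Submodule.subset_span ⟨_, _, rfl⟩)

lemma toSubmodule_schurAlgebra :
    Subalgebra.toSubmodule (schurAlgebra K n r) =
      Submodule.span K {g | ∃ i j : FinIdx n r, g = xiFin K n r i j} :=
  le_antisymm (fun _ => mem_span_xiFin_of_mem_schurAlgebra)
    (Submodule.span_le.2 fun _ ⟨i, j, hg⟩ => hg ▸ xiFin_mem_schurAlgebra i j)

lemma image_extendAlgHom_schurAlgebra [NeZero n] :
    extendAlgHom K n r '' (schurAlgebra K n r : Set _) =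
      Submodule.span K {f | ∃ i j : FinIdx n r, f = xi K n r i.1 j.1} := by
  have hgen : extendAlgHom K n r '' {g | ∃ i j : FinIdx n r, g = xiFin K n r i j} =
      {f | ∃ i j : FinIdx n r, f = xi K n r i.1 j.1} := by
    ext f
    simp [extendAlgHom_xiFin, eq_comm]
  rw [← Subalgebra.coe_toSubmodule, toSubmodule_schurAlgebra, ← hgen]
  exact (Submodule.map_coe _ _).symm.trans
    (congrArg SetLike.coe (Submodule.map_span (extendAlgHom K n r).toLinearMap _))

lemma span_xi_le_affineSchur :
    Submodule.span K {f | ∃ i j : FinIdx n r, f = xi K n r i.1 j.1} ≤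
      Subalgebra.toSubmodule (affineSchur K n r) :=
  Submodule.span_le.2 fun _ ⟨i, j, hf⟩ => hf ▸ xi_mem_affineSchur i.1 j.1

end Span

theorem schurAlgebra_embeds_general (K : Type*) [Field K]
    (n r : ℕ) (hn : 1 ≤ n) :
    ∃ Φ : schurAlgebra K n r →ₐ[K] Module.End K (TensorSpace K r),
      Function.Injective Φ ∧
      (∀ (i j : FinIdx n r) (h : xiFin K n r i j ∈ schurAlgebra K n r),
        Φ ⟨xiFin K n r i j, h⟩ = xi K n r i.1 j.1) ∧
      Set.range Φ =
        (Submodule.span K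
          {f : Module.End K (TensorSpace K r) |
            ∃ i j : FinIdx n r, f = xi K n r i.1 j.1} : Set _) ∧
      ∀ x, Φ x ∈ affineSchur K n r := by
  have : NeZero n := ⟨by omega⟩
  have hrange : Set.range ((extendAlgHom K n r).comp (schurAlgebra K n r).val) =
      Submodule.span K {f | ∃ i j : FinIdx n r, f = xi K n r i.1 j.1} := by
    rw [AlgHom.coe_comp, Set.range_comp, Subalgebra.coe_val, Subtype.range_coe,
      image_extendAlgHom_schurAlgebra]
  refine ⟨(extendAlgHom K n r).comp (schurAlgebra K n r).val,
    extendEnd_injective.comp Subtype.val_injective, fun i j _ => extendAlgHom_xiFin i j, hrange,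
    fun x => span_xi_le_affineSchur ?_⟩
  rw [← SetLike.mem_coe, ← hrange]
  exact Set.mem_range_self x

/-- the Schur algebra S(n,r) = End_{KΣ_r}(E^{⊗r}) embeds naturally into the
affine Schur algebra: there is an injective unital K-algebra homomorphism
Φ : End_{KΣ_r}(E^{⊗r}) → End_K(Ẽ^{⊗r}) with Φ(ξ^fin_{i,j}) = ξ_{i,j} for i,j ∈ I(n,r),
whose image is the K-span of {ξ_{i,j} : i,j ∈ I(n,r)} and is contained in the centralizer
algebra End_{KΣ̂_r}(Ẽ^{⊗r}). -/
theorem schurAlgebra_embeds (K : Type*) [Field K] [Infinite K]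
    (n r : ℕ) (hn : 1 ≤ n) (hr : 1 ≤ r) :
    ∃ Φ : schurAlgebra K n r →ₐ[K] Module.End K (TensorSpace K r),
      Function.Injective Φ ∧
      (∀ (i j : FinIdx n r) (h : xiFin K n r i j ∈ schurAlgebra K n r),
        Φ ⟨xiFin K n r i j, h⟩ = xi K n r i.1 j.1) ∧
      Set.range Φ =
        (Submodule.span K
          {f : Module.End K (TensorSpace K r) |
            ∃ i j : FinIdx n r, f = xi K n r i.1 j.1} : Set _) ∧
      ∀ x, Φ x ∈ affineSchur K n r :=
  schurAlgebra_embeds_general K n r hn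

end AffineSchur
end
end

section
/- Let K be an infinite field, n, r ≥ 1, and a ∈ Kˣ. There exists a surjective unital K-algebra homomorphism Ψ_a : End_{KΣ̂_r}(Ẽ^{⊗r}) → End_{KΣ_r}(E^{⊗r}) such that for all i, j ∈ I(n,r) and all ε ∈ (Fin r → ℤ): Ψ_a(ξ_{i, j+nε}) = a^{ht(ε)} · [Σ_{i,j} : Σ_{i,j,ε}] · ξ^fin_{i,j}, where ht(ε) = Σ_k ε_k ∈ ℤ, a^{ht(ε)} is the integer power of the unit a, Σ_{i,j} = {σ ∈ Σ_r : i∘σ = i and j∘σ = j}, Σ_{i,j,ε} = {σ ∈ Σ_{i,j} : ε∘σ = ε}, and the (finite) subgroup index [Σ_{i,j} : Σ_{i,j,ε}] is cast into K. In particular Ψ_a(ξ_{i,j}) = ξ^fin_{i,j} for i, j ∈ I(n,r), so Ψ_a restricts to the identity on the naturally embedded Schur algebra. -/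
noncomputable section

namespace AffineSchur

variable (K : Type*) [Field K] (n r : ℕ)

/-- The stabilizer of a tuple i : Fin r → ℤ under the place-permutation action,
as a subgroup of the symmetric group Σ_r. -/
def permStab (i : Fin r → ℤ) : Subgroup (Equiv.Perm (Fin r)) where
  carrier := {σ | ∀ k, i (σ k) = i k}
  one_mem' := fun k => by simp
  mul_mem' := by
    intro a b ha hb k
    simp only [Equiv.Perm.mul_apply]
    rw [ha (b k), hb k]
  inv_mem' := by
    intro a ha k
    have h := ha (a⁻¹ k)
    rw [show a (a⁻¹ k) = k from a.apply_symm_apply k] at h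
    exact h.symm

/-!
Write `i ∈ I(ℤ,r)` as `i = ī + n·q` with `ī ∈ I(n,r)`, and let `π_a : v_i ↦ a^{-ht q} v_ī` and
`ι : E^{⊗r} → Ẽ^{⊗r}` the inclusion. Then `π_a ∘ T_{σ,ε} = a^{-ht ε} • T_σ ∘ π_a` and
`π_a ∘ ι = id`. Since `v_i = T_{1,q} (ι v_ī)`, every `φ` commuting with the translations satisfies
`π_a ∘ φ = (π_a ∘ φ ∘ ι) ∘ π_a`, so `Ψ_a(φ) = π_a ∘ φ ∘ ι` is multiplicative, and it lands in
`S(n,r)`. It is onto because every `ψ ∈ S(n,r)` extends to `v_i ↦ T_{1,q} (ι ψ v_ī)`.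
Finally, `ξ_{i,j+nε}(v_l)` is the sum of the distinct `v_{i∘σ - n·ε∘σ}` with `j∘σ = l`; `π_a` sends
each to `a^{ht ε} v_{i∘σ}`, and those lying over a fixed `v_{i∘σ₀}` are indexed by the
`Σ_{i,j}`-orbit of `ε`, which has `[Σ_{i,j} : Σ_{i,j,ε}]` elements.
-/

section Compression

variable {R V W : Type*} [CommSemiring R] [AddCommMonoid V] [Module R V]
  [AddCommMonoid W] [Module R W]

def compressAlgHom (π : V →ₗ[R] W) (ι : W →ₗ[R] V) (hπι : π ∘ₗ ι = LinearMap.id)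
    (A : Subalgebra R (Module.End R V))
    (hA : ∀ φ ∈ A, π ∘ₗ φ = (π ∘ₗ φ ∘ₗ ι) ∘ₗ π) :
    A →ₐ[R] Module.End R W where
  toFun φ := π ∘ₗ (φ : Module.End R V) ∘ₗ ι
  map_one' := by simpa [Module.End.one_eq_id] using hπι
  map_mul' φ ψ := by
    have h := congrArg (· ∘ₗ (ψ : Module.End R V) ∘ₗ ι) (hA φ φ.2)
    simpa only [Subalgebra.coe_mul, Module.End.mul_eq_comp, LinearMap.comp_assoc] using h
  map_zero' := by simp
  map_add' φ ψ := by simp [LinearMap.add_comp, LinearMap.comp_add]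
  commutes' c := by
    simp [Algebra.algebraMap_eq_smul_one, Module.End.one_eq_id, LinearMap.smul_comp,
      LinearMap.comp_smul, hπι]

end Compression

variable {K n r}

/-- Entries are reduced into `{1,…,n}` rather than `{0,…,n-1}`, hence the shifts by one. -/
def residue (hn : 0 < n) (i : Fin r → ℤ) : FinIdx n r :=
  ⟨fun k => (i k - 1) % n + 1, fun k => by
    have h0 := Int.emod_nonneg (i k - 1) (by omega : (n : ℤ) ≠ 0)
    have h1 := Int.emod_lt_of_pos (i k - 1) (by omega : (0 : ℤ) < n)
    dsimp only
    constructor <;> omega⟩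

def quotient (n : ℕ) (i : Fin r → ℤ) : Fin r → ℤ := fun k => (i k - 1) / n

lemma residue_add_mul_quotient (hn : 0 < n) (i : Fin r → ℤ) (k : Fin r) :
    (residue hn i).1 k + n * quotient n i k = i k := by
  have := Int.emod_add_mul_ediv (i k - 1) n
  simp only [residue, quotient]
  linarith

lemma residue_add_mul (hn : 0 < n) (i ε : Fin r → ℤ) :
    residue hn (fun k => i k + n * ε k) = residue hn i := by
  refine Subtype.ext (funext fun k => ?_)
  simp only [residue, add_sub_right_comm, Int.add_mul_emod_self_left]

lemma quotient_add_mul (hn : 0 < n) (i ε : Fin r → ℤ) :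
    quotient n (fun k => i k + n * ε k) = fun k => quotient n i k + ε k := by
  funext k
  simp only [quotient, add_sub_right_comm]
  rw [Int.add_mul_ediv_left _ _ (by omega)]

lemma residue_val (hn : 0 < n) (i : FinIdx n r) : residue hn i.1 = i := by
  refine Subtype.ext (funext fun k => ?_)
  have := i.2 k
  simp only [residue]
  rw [Int.emod_eq_of_lt (by omega) (by omega)]
  ring

lemma quotient_val (i : FinIdx n r) : quotient n i.1 = 0 := by
  funext k
  have := i.2 k
  exact Int.ediv_eq_zero_of_lt (by omega) (by omega)

lemma residue_val_add_mul (hn : 0 < n) (i : FinIdx n r) (ε : Fin r → ℤ) :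
    residue hn (fun k => i.1 k + n * ε k) = i := by
  rw [residue_add_mul, residue_val]

lemma quotient_val_add_mul (hn : 0 < n) (i : FinIdx n r) (ε : Fin r → ℤ) :
    quotient n (fun k => i.1 k + n * ε k) = ε := by
  simp [quotient_add_mul hn, quotient_val]

def FinIdx.permute (i : FinIdx n r) (σ : Equiv.Perm (Fin r)) : FinIdx n r :=
  ⟨fun k => i.1 (σ k), fun k => i.2 (σ k)⟩

lemma residue_comp (hn : 0 < n) (i : Fin r → ℤ) (σ : Equiv.Perm (Fin r)) :
    residue hn (fun k => i (σ k)) = (residue hn i).permute σ := rfl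

lemma quotient_comp (i : Fin r → ℤ) (σ : Equiv.Perm (Fin r)) :
    quotient n (fun k => i (σ k)) = fun k => quotient n i (σ k) := rfl

lemma sum_quotient_comp (i : Fin r → ℤ) (σ : Equiv.Perm (Fin r)) :
    ∑ k, quotient n (fun k => i (σ k)) k = ∑ k, quotient n i k :=
  Equiv.sum_comp σ (quotient n i)

variable (K)

lemma transOp_single (σ : Equiv.Perm (Fin r)) (ε i : Fin r → ℤ) (c : K) :
    transOp K n r σ ε (Finsupp.single i c) = Finsupp.single (act n r σ ε i) c :=
  Finsupp.mapDomain_single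

lemma permOpFin_single (σ : Equiv.Perm (Fin r)) (i : FinIdx n r) (c : K) :
    permOpFin K n r σ (Finsupp.single i c) = Finsupp.single (i.permute σ) c :=
  Finsupp.mapDomain_single

lemma transOp_comp (σ τ : Equiv.Perm (Fin r)) (ε δ : Fin r → ℤ) :
    transOp K n r σ ε ∘ₗ transOp K n r τ δ
      = transOp K n r (τ * σ) (fun k => δ (σ k) + ε k) := by
  refine Finsupp.lhom_ext fun i c => ?_
  simp only [LinearMap.comp_apply, transOp_single]
  congr 1
  funext k
  simp only [act, Equiv.Perm.mul_apply]
  ring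

def proj (hn : 0 < n) (a : Kˣ) : TensorSpace K r →ₗ[K] FinTensorSpace K n r :=
  Finsupp.linearCombination K fun i =>
    Finsupp.single (residue hn i) ((a ^ (-∑ k, quotient n i k) : Kˣ) : K)

def incl : FinTensorSpace K n r →ₗ[K] TensorSpace K r :=
  Finsupp.lmapDomain K K Subtype.val

lemma proj_single (hn : 0 < n) (a : Kˣ) (i : Fin r → ℤ) (c : K) :
    proj K hn a (Finsupp.single i c)
      = Finsupp.single (residue hn i) (c * ((a ^ (-∑ k, quotient n i k) : Kˣ) : K)) := by
  rw [proj, Finsupp.linearCombination_single, Finsupp.smul_single, smul_eq_mul]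

lemma incl_single (i : FinIdx n r) (c : K) :
    incl K (Finsupp.single i c) = Finsupp.single i.1 c :=
  Finsupp.mapDomain_single

lemma proj_comp_transOp (hn : 0 < n) (a : Kˣ) (σ : Equiv.Perm (Fin r)) (ε : Fin r → ℤ) :
    proj K hn a ∘ₗ transOp K n r σ ε
      = ((a ^ (-∑ k, ε k) : Kˣ) : K) • (permOpFin K n r σ ∘ₗ proj K hn a) := by
  refine Finsupp.lhom_ext fun i c => ?_
  have hact : act n r σ ε i = fun k => i (σ k) + n * ε k := rfl
  simp only [LinearMap.comp_apply, LinearMap.smul_apply, transOp_single, proj_single,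
    permOpFin_single, hact, residue_add_mul hn, quotient_add_mul hn, Finset.sum_add_distrib,
    residue_comp, sum_quotient_comp, Finsupp.smul_single, smul_eq_mul]
  congr 1
  rw [neg_add, zpow_add, Units.val_mul]
  ring

lemma incl_comp_permOpFin (σ : Equiv.Perm (Fin r)) :
    incl K ∘ₗ permOpFin K n r σ = transOp K n r σ 0 ∘ₗ incl K := by
  refine Finsupp.lhom_ext fun i c => ?_
  simp only [LinearMap.comp_apply, permOpFin_single, incl_single, transOp_single]
  congr 1
  funext k
  simp [act, FinIdx.permute]

lemma proj_comp_incl (hn : 0 < n) (a : Kˣ) :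
    proj K hn a ∘ₗ incl K = (LinearMap.id : Module.End K (FinTensorSpace K n r)) := by
  refine Finsupp.lhom_ext fun i c => ?_
  simp [incl_single, proj_single, residue_val, quotient_val]

lemma single_eq_smul_transOp_incl (hn : 0 < n) (i : Fin r → ℤ) (c : K) :
    Finsupp.single i c
      = c • transOp K n r 1 (quotient n i) (incl K (Finsupp.single (residue hn i) 1)) := by
  have h : act n r 1 (quotient n i) (residue hn i).1 = i :=
    funext (residue_add_mul_quotient hn i)
  rw [incl_single, transOp_single, h, Finsupp.smul_single, smul_eq_mul, mul_one]

lemma mem_affineSchur_iff {φ : Module.End K (TensorSpace K r)} :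
    φ ∈ affineSchur K n r ↔ ∀ σ ε, transOp K n r σ ε ∘ₗ φ = φ ∘ₗ transOp K n r σ ε := by
  simp only [affineSchur, Subalgebra.mem_centralizer_iff, Set.forall_mem_range, Prod.forall,
    Module.End.mul_eq_comp, eq_comm]

lemma mem_schurAlgebra_iff {ψ : Module.End K (FinTensorSpace K n r)} :
    ψ ∈ schurAlgebra K n r ↔ ∀ σ, permOpFin K n r σ ∘ₗ ψ = ψ ∘ₗ permOpFin K n r σ := by
  simp only [schurAlgebra, Subalgebra.mem_centralizer_iff, Set.forall_mem_range,
    Module.End.mul_eq_comp, eq_comm]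

lemma permOpFin_one : permOpFin K n r 1 = LinearMap.id :=
  Finsupp.lhom_ext fun i c => by rw [permOpFin_single]; rfl

lemma transOp_one_zero : transOp K n r 1 0 = LinearMap.id :=
  Finsupp.lhom_ext fun i c => by
    rw [transOp_single]
    congr 1
    funext k
    simp [act]

lemma proj_comp_eq_of_mem (hn : 0 < n) (a : Kˣ) {φ : Module.End K (TensorSpace K r)}
    (hφ : φ ∈ affineSchur K n r) :
    proj K hn a ∘ₗ φ = (proj K hn a ∘ₗ φ ∘ₗ incl K) ∘ₗ proj K hn a := by
  refine Finsupp.lhom_ext fun i c => ?_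
  set v : FinTensorSpace K n r := Finsupp.single (residue hn i) 1
  set u : K := ((a ^ (-∑ k, quotient n i k) : Kˣ) : K)
  have hcomm := (mem_affineSchur_iff K).mp hφ 1 (quotient n i)
  calc proj K hn a (φ (Finsupp.single i c))
      = c • (proj K hn a ∘ₗ transOp K n r 1 (quotient n i)) (φ (incl K v)) := by
        rw [single_eq_smul_transOp_incl K hn, map_smul, map_smul, ← LinearMap.comp_apply φ,
          ← hcomm, LinearMap.comp_apply, LinearMap.comp_apply]
    _ = (c * u) • proj K hn a (φ (incl K v)) := by
        rw [proj_comp_transOp, permOpFin_one, LinearMap.id_comp, LinearMap.smul_apply,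
          smul_smul]
    _ = (proj K hn a ∘ₗ φ ∘ₗ incl K) (proj K hn a (Finsupp.single i c)) := by
        rw [proj_single, ← Finsupp.smul_single_one, map_smul]
        rfl

lemma compress_mem_schurAlgebra (hn : 0 < n) (a : Kˣ) {φ : Module.End K (TensorSpace K r)}
    (hφ : φ ∈ affineSchur K n r) :
    proj K hn a ∘ₗ φ ∘ₗ incl K ∈ schurAlgebra K n r := by
  refine (mem_schurAlgebra_iff K).mpr fun σ => ?_
  have hπ : proj K hn a ∘ₗ transOp K n r σ 0 = permOpFin K n r σ ∘ₗ proj K hn a := by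
    simpa using proj_comp_transOp K hn a σ 0
  calc permOpFin K n r σ ∘ₗ proj K hn a ∘ₗ φ ∘ₗ incl K
      = proj K hn a ∘ₗ (transOp K n r σ 0 ∘ₗ φ) ∘ₗ incl K := by
        simp only [← LinearMap.comp_assoc, hπ]
    _ = proj K hn a ∘ₗ φ ∘ₗ incl K ∘ₗ permOpFin K n r σ := by
        rw [(mem_affineSchur_iff K).mp hφ, LinearMap.comp_assoc, incl_comp_permOpFin]
    _ = (proj K hn a ∘ₗ φ ∘ₗ incl K) ∘ₗ permOpFin K n r σ := by
        simp only [LinearMap.comp_assoc]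

variable (r) in
def psi (hn : 0 < n) (a : Kˣ) : affineSchur K n r →ₐ[K] schurAlgebra K n r :=
  (compressAlgHom (proj K hn a) (incl K) (proj_comp_incl K hn a) (affineSchur K n r)
    fun _ hφ => proj_comp_eq_of_mem K hn a hφ).codRestrict _
    fun φ => compress_mem_schurAlgebra K hn a φ.2

lemma psi_apply (hn : 0 < n) (a : Kˣ) (φ : affineSchur K n r) :
    (psi K r hn a φ : Module.End K (FinTensorSpace K n r))
      = proj K hn a ∘ₗ (φ : Module.End K (TensorSpace K r)) ∘ₗ incl K := rfl

def lift (hn : 0 < n) (ψ : Module.End K (FinTensorSpace K n r)) :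
    Module.End K (TensorSpace K r) :=
  Finsupp.linearCombination K fun i =>
    transOp K n r 1 (quotient n i) (incl K (ψ (Finsupp.single (residue hn i) 1)))

lemma lift_single (hn : 0 < n) (ψ : Module.End K (FinTensorSpace K n r)) (i : Fin r → ℤ)
    (c : K) :
    lift K hn ψ (Finsupp.single i c)
      = c • transOp K n r 1 (quotient n i) (incl K (ψ (Finsupp.single (residue hn i) 1))) :=
  Finsupp.linearCombination_single K c i

lemma lift_mem_affineSchur (hn : 0 < n) {ψ : Module.End K (FinTensorSpace K n r)}
    (hψ : ψ ∈ schurAlgebra K n r) : lift K hn ψ ∈ affineSchur K n r := by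
  refine (mem_affineSchur_iff K).mpr fun σ ε => Finsupp.lhom_ext fun i c => ?_
  set v : FinTensorSpace K n r := Finsupp.single (residue hn i) 1
  have hact : act n r σ ε i = fun k => i (σ k) + n * ε k := rfl
  have hψσ : ψ (permOpFin K n r σ v) = permOpFin K n r σ (ψ v) :=
    (LinearMap.congr_fun ((mem_schurAlgebra_iff K).mp hψ σ) v).symm
  have hισ : incl K (permOpFin K n r σ (ψ v)) = transOp K n r σ 0 (incl K (ψ v)) :=
    LinearMap.congr_fun (incl_comp_permOpFin K σ) (ψ v)
  have hT := transOp_comp K (n := n) σ 1 ε (quotient n i)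
  have hT' := transOp_comp K (n := n) 1 σ (fun k => quotient n i (σ k) + ε k) 0
  simp only [one_mul, mul_one, Pi.zero_apply, zero_add] at hT hT'
  simp only [LinearMap.comp_apply, lift_single, transOp_single, map_smul, hact,
    residue_add_mul hn, quotient_add_mul hn, residue_comp, quotient_comp]
  rw [← permOpFin_single, hψσ, hισ]
  congr 1
  exact (LinearMap.congr_fun hT _).trans (LinearMap.congr_fun hT' _).symm

lemma compress_lift (hn : 0 < n) (a : Kˣ) (ψ : Module.End K (FinTensorSpace K n r)) :
    proj K hn a ∘ₗ lift K hn ψ ∘ₗ incl K = ψ := by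
  refine Finsupp.lhom_ext fun i c => ?_
  rw [LinearMap.comp_apply, LinearMap.comp_apply, incl_single, lift_single, residue_val,
    quotient_val, transOp_one_zero, LinearMap.id_apply, map_smul, ← LinearMap.comp_apply _ (incl K),
    proj_comp_incl, LinearMap.id_apply, ← map_smul, Finsupp.smul_single_one]

lemma psi_surjective (hn : 0 < n) (a : Kˣ) : Function.Surjective (psi K r hn a) :=
  fun ψ => ⟨⟨lift K hn ψ, lift_mem_affineSchur K hn ψ.2⟩,
    Subtype.ext ((psi_apply K hn a _).trans (compress_lift K hn a ψ.1))⟩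

lemma dvd_sub_iff_eq_of_mem_Icc {x y : ℤ} (hx : x ∈ Set.Icc 1 (n : ℤ))
    (hy : y ∈ Set.Icc 1 (n : ℤ)) : (n : ℤ) ∣ x - y ↔ x = y := by
  obtain ⟨hx₁, hx₂⟩ := hx
  obtain ⟨hy₁, hy₂⟩ := hy
  refine ⟨fun h => ?_, fun h => by rw [h, sub_self]; exact dvd_zero _⟩
  have := Int.eq_zero_of_abs_lt_dvd h (abs_lt.mpr ⟨by omega, by omega⟩)
  omega

lemma xiSupport_add_mul (i j l : FinIdx n r) (ε : Fin r → ℤ) :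
    xiSupport n r i.1 (fun k => j.1 k + n * ε k) l.1
      = (Finset.univ.filter fun σ : Equiv.Perm (Fin r) => (fun k => j.1 (σ k)) = l.1).image
          fun σ k => i.1 (σ k) - n * ε (σ k) := by
  classical
  have hfilter : ∀ σ : Equiv.Perm (Fin r),
      (∀ k, (n : ℤ) ∣ l.1 k - (j.1 (σ k) + n * ε (σ k))) ↔ (fun k => j.1 (σ k)) = l.1 := by
    intro σ
    refine (forall_congr' fun k => ?_).trans funext_iff.symm
    rw [← sub_sub, dvd_sub_left (dvd_mul_right _ _), eq_comm]
    exact dvd_sub_iff_eq_of_mem_Icc (l.2 k) (j.2 (σ k))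
  unfold xiSupport
  rw [Finset.filter_congr fun σ _ => hfilter σ]
  refine Finset.image_congr fun σ hσ => funext fun k => ?_
  have hk : j.1 (σ k) = l.1 k := congrFun (Finset.mem_filter.mp hσ).2 k
  simp only [hk]
  ring

lemma residue_permute_sub_mul (hn : 0 < n) (i : FinIdx n r) (ε : Fin r → ℤ)
    (σ : Equiv.Perm (Fin r)) :
    residue hn (fun k => i.1 (σ k) - n * ε (σ k)) = i.permute σ := by
  have h := residue_val_add_mul hn (i.permute σ) fun k => -ε (σ k)
  simp only [mul_neg, ← sub_eq_add_neg] at h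
  exact h

lemma proj_single_permute_sub_mul (hn : 0 < n) (a : Kˣ) (i : FinIdx n r) (ε : Fin r → ℤ)
    (σ : Equiv.Perm (Fin r)) :
    proj K hn a (Finsupp.single (fun k => i.1 (σ k) - n * ε (σ k)) 1)
      = Finsupp.single (i.permute σ) ((a ^ (∑ k, ε k) : Kˣ) : K) := by
  have hq : quotient n (fun k => i.1 (σ k) - n * ε (σ k)) = fun k => -ε (σ k) := by
    have h := quotient_val_add_mul hn (i.permute σ) fun k => -ε (σ k)
    simp only [mul_neg, ← sub_eq_add_neg] at h
    exact h
  rw [proj_single, residue_permute_sub_mul, hq, one_mul, Finset.sum_neg_distrib, neg_neg,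
    Equiv.sum_comp σ ε]

section Orbits

attribute [local instance] arrowAction

lemma relIndex_permStab_eq_ncard_orbit (H : Subgroup (Equiv.Perm (Fin r))) (ε : Fin r → ℤ) :
    (permStab r ε).relIndex H = (MulAction.orbit H ε).ncard := by
  rw [Subgroup.relIndex, ← MulAction.index_stabilizer]
  congr 1
  ext τ
  rw [Subgroup.mem_subgroupOf, MulAction.mem_stabilizer_iff, ← Subgroup.inv_mem_iff, funext_iff]
  rfl

/-- The fibre of `ξ_{i,j+nε}(v_l)` over `v_{i∘σ₀}` under reduction mod `n` is a copy of the orbit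
of `ε` under `Σ_{i,j}`, whose stabilizer is `Σ_{i,j,ε}`. -/
lemma card_filter_residue_eq_relIndex [DecidableEq (FinIdx n r)] (hn : 0 < n)
    (i j l : FinIdx n r) (ε : Fin r → ℤ) {σ₀ : Equiv.Perm (Fin r)}
    (hσ₀ : (fun k => j.1 (σ₀ k)) = l.1) :
    ((xiSupport n r i.1 (fun k => j.1 k + n * ε k) l.1).filter
        fun k => residue hn k = i.permute σ₀).card
      = (permStab r ε).relIndex (permStab r i.1 ⊓ permStab r j.1) := by
  set H := permStab r i.1 ⊓ permStab r j.1
  have hfiber : ((xiSupport n r i.1 (fun k => j.1 k + n * ε k) l.1).filter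
        fun k => residue hn k = i.permute σ₀ : Set (Fin r → ℤ))
      = (fun e m => i.1 (σ₀ m) - n * e (σ₀ m)) '' MulAction.orbit H ε := by
    ext k
    simp only [Finset.coe_filter, xiSupport_add_mul, Finset.mem_image, Finset.mem_filter,
      Finset.mem_univ, true_and, Set.mem_image, MulAction.mem_orbit_iff]
    constructor
    · rintro ⟨⟨σ, hσ, rfl⟩, hres⟩
      have hi : ∀ m, i.1 (σ m) = i.1 (σ₀ m) := fun m =>
        congrFun (congrArg Subtype.val ((residue_permute_sub_mul hn i ε σ).symm.trans hres)) m
      have hτ : σ₀ * σ⁻¹ ∈ H := by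
        refine Subgroup.mem_inf.mpr ⟨fun k => ?_, fun k => ?_⟩
        · simpa using (hi (σ⁻¹ k)).symm
        · simpa using (congrFun hσ₀ (σ⁻¹ k)).trans (congrFun hσ (σ⁻¹ k)).symm
      refine ⟨_, ⟨⟨σ₀ * σ⁻¹, hτ⟩, rfl⟩, funext fun m => ?_⟩
      change i.1 (σ₀ m) - n * ε ((σ₀ * σ⁻¹)⁻¹ (σ₀ m)) = _
      simp [hi]
    · rintro ⟨_, ⟨τ, rfl⟩, rfl⟩
      have hτ := (Subgroup.mem_inf.mp (inv_mem τ.2))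
      refine ⟨⟨(τ : Equiv.Perm (Fin r))⁻¹ * σ₀, funext fun k => ?_, funext fun m => ?_⟩,
        residue_permute_sub_mul hn i _ σ₀⟩
      · exact (hτ.2 (σ₀ k)).trans (congrFun hσ₀ k)
      · change _ = i.1 (σ₀ m) - n * ε ((τ : Equiv.Perm (Fin r))⁻¹ (σ₀ m))
        rw [Equiv.Perm.mul_apply, hτ.1 (σ₀ m)]
  have hinj : Function.Injective fun (e : Fin r → ℤ) m => i.1 (σ₀ m) - n * e (σ₀ m) := by
    intro e e' h
    funext x
    obtain ⟨m, rfl⟩ := σ₀.surjective x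
    have := congrFun h m
    simp only [sub_right_inj] at this
    exact mul_left_cancel₀ (by omega) this
  rw [← Set.ncard_coe_finset, hfiber, Set.ncard_image_of_injective _ hinj,
    relIndex_permStab_eq_ncard_orbit]

end Orbits

lemma xi_single (i j l : Fin r → ℤ) (c : K) :
    xi K n r i j (Finsupp.single l c) = c • ∑ k ∈ xiSupport n r i j l, Finsupp.single k 1 := by
  rw [xi, Finsupp.lsum_single, LinearMap.toSpanSingleton_apply]

lemma xiFin_single (i j l : FinIdx n r) (c : K) :
    xiFin K n r i j (Finsupp.single l c)
      = c • ∑ t ∈ xiFinSupport n r i j l, Finsupp.single t 1 := by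
  rw [xiFin, Finsupp.lsum_single, LinearMap.toSpanSingleton_apply]

lemma compress_xi (hn : 0 < n) (a : Kˣ) (i j : FinIdx n r) (ε : Fin r → ℤ) :
    proj K hn a ∘ₗ xi K n r i.1 (fun k => j.1 k + n * ε k) ∘ₗ incl K
      = (((a ^ (∑ k, ε k) : Kˣ) : K) *
          ((Subgroup.relIndex (permStab r ε) (permStab r i.1 ⊓ permStab r j.1) : ℕ) : K)) •
        xiFin K n r i j := by
  classical
  refine Finsupp.lhom_ext fun l c => ?_
  set A : K := ((a ^ (∑ k, ε k) : Kˣ) : K)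
  set m := (permStab r ε).relIndex (permStab r i.1 ⊓ permStab r j.1)
  set S := xiSupport n r i.1 (fun k => j.1 k + n * ε k) l.1
  have hS : S = (Finset.univ.filter fun σ : Equiv.Perm (Fin r) =>
      (fun k => j.1 (σ k)) = l.1).image fun σ k => i.1 (σ k) - n * ε (σ k) :=
    xiSupport_add_mul i j l ε
  have hproj : ∀ k ∈ S, proj K hn a (Finsupp.single k 1) = Finsupp.single (residue hn k) A := by
    intro k hk
    obtain ⟨σ, -, rfl⟩ := Finset.mem_image.mp (hS ▸ hk)
    rw [proj_single_permute_sub_mul, residue_permute_sub_mul]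
  have himage : S.image (residue hn) = xiFinSupport n r i j l := by
    rw [hS, Finset.image_image]
    exact Finset.image_congr fun σ _ => residue_permute_sub_mul hn i ε σ
  have hcard : ∀ t ∈ xiFinSupport n r i j l, (S.filter fun k => residue hn k = t).card = m := by
    intro t ht
    obtain ⟨σ₀, hσ₀, rfl⟩ := Finset.mem_image.mp ht
    exact card_filter_residue_eq_relIndex hn i j l ε (Finset.mem_filter.mp hσ₀).2
  calc proj K hn a (xi K n r i.1 (fun k => j.1 k + n * ε k) (incl K (Finsupp.single l c)))
      = c • ∑ k ∈ S, Finsupp.single (residue hn k) A := by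
        rw [incl_single, xi_single, map_smul, map_sum, Finset.sum_congr rfl hproj]
    _ = c • ∑ t ∈ xiFinSupport n r i j l, m • Finsupp.single t A := by
        rw [Finset.sum_comp (fun t => Finsupp.single t A), himage,
          Finset.sum_congr rfl fun t ht => by rw [hcard t ht]]
    _ = ((A * m) • xiFin K n r i j) (Finsupp.single l c) := by
        simp only [LinearMap.smul_apply, xiFin_single, Finset.smul_sum, Finsupp.smul_single,
          nsmul_eq_mul, smul_eq_mul, mul_one]
        refine Finset.sum_congr rfl fun t _ => ?_
        ring_nf

theorem exists_psi_onto_schurAlgebra_general (K : Type*) [Field K]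
    (n r : ℕ) (hn : 1 ≤ n) (a : Kˣ) :
    ∃ Ψ : affineSchur K n r →ₐ[K] schurAlgebra K n r,
      Function.Surjective Ψ ∧
      ∀ (i j : FinIdx n r) (ε : Fin r → ℤ) (x : affineSchur K n r),
        (x : Module.End K (TensorSpace K r))
            = xi K n r i.1 (fun k => j.1 k + n * ε k) →
        (Ψ x : Module.End K (FinTensorSpace K n r))
            = (((a ^ (∑ k, ε k) : Kˣ) : K) *
                ((Subgroup.relIndex (permStab r ε)
                  (permStab r i.1 ⊓ permStab r j.1) : ℕ) : K)) •
              xiFin K n r i j := by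
  refine ⟨psi K r hn a, psi_surjective K hn a, fun i j ε x hx => ?_⟩
  rw [psi_apply, hx]
  exact compress_xi K hn a i j ε

/-- there is a surjective unital K-algebra homomorphism
Ψ_a : End_{KΣ̂_r}(Ẽ^{⊗r}) → End_{KΣ_r}(E^{⊗r}) with
Ψ_a(ξ_{i, j+nε}) = a^{ht(ε)} · [Σ_{i,j} : Σ_{i,j,ε}] · ξ^fin_{i,j}
for all i,j ∈ I(n,r) and ε ∈ ℤ^r, where ht(ε) = Σ_k ε_k and the index
[Σ_{i,j} : Σ_{i,j,ε}] is cast into K. -/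
theorem exists_psi_onto_schurAlgebra (K : Type*) [Field K] [Infinite K]
    (n r : ℕ) (hn : 1 ≤ n) (hr : 1 ≤ r) (a : Kˣ) :
    ∃ Ψ : affineSchur K n r →ₐ[K] schurAlgebra K n r,
      Function.Surjective Ψ ∧
      ∀ (i j : FinIdx n r) (ε : Fin r → ℤ) (x : affineSchur K n r),
        (x : Module.End K (TensorSpace K r))
            = xi K n r i.1 (fun k => j.1 k + n * ε k) →
        (Ψ x : Module.End K (FinTensorSpace K n r))
            = (((a ^ (∑ k, ε k) : Kˣ) : K) *
                ((Subgroup.relIndex (permStab r ε)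
                  (permStab r i.1 ⊓ permStab r j.1) : ℕ) : K)) •
              xiFin K n r i j :=
  exists_psi_onto_schurAlgebra_general K n r hn a

end AffineSchur
end
end
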